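/- Let ℓ₁, k₁, k be integers with 0 ≤ ℓ₁ ≤ k₁ < k, and let n = ∏_{j=1}^{k} p_j^{a_j} where the p_j are pairwise distinct primes, the a_j are positive integers, and p_{k₁+1} < p_{k₁+2} < ⋯ < p_k. Let t_min and t_max be positive real numbers with t_min ≤ σ₋₁(n) ≤ t_max, and set m = t_min / ((∏_{j=1}^{ℓ₁} σ₋₁(p_j^{a_j})) · (∏_{j=ℓ₁+1}^{k₁} p_j/(p_j − 1))). Suppose k₁ + 2 ≤ k, a_{k₁+1} ≥ 2, and A is a real number with 1 < A ≤ p_{k₁+1} and m(A − 1)/A > 1. Then p_{k₁+2} < 1 + (k − k₁ − 1)/(m(A − 1)/A − 1). -/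

import Mathlib

/-!
Since σ₋₁ is multiplicative, σ₋₁(n) = ∏ σ₋₁(p_j^{a_j}), and each factor is below p_j/(p_j − 1).
Dividing t_min by the known factors gives m ≤ σ₋₁(p_{k₁+1}^{a_{k₁+1}}) · ∏_{j ≥ k₁+2} σ₋₁(p_j^{a_j}).
The first factor is below p_{k₁+1}/(p_{k₁+1} − 1) ≤ A/(A − 1). The primes p_{k₁+2} < ⋯ < p_k are
increasing integers, so p_{k₁+2+i} ≥ q + i with q = p_{k₁+2}, and as x/(x − 1) is decreasing the
remaining product is at most the telescoping product ∏_{i<K} (q + i)/(q + i − 1) = (q + K − 1)/(q − 1),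
where K = k − k₁ − 1. Solving m(A − 1)/A < (q + K − 1)/(q − 1) for q gives the bound.
-/

open ArithmeticFunction Finset Function
open scoped ArithmeticFunction.sigma

noncomputable def abundancy (n : ℕ) : ℝ := (σ 1 n : ℝ) / n

lemma abundancy_nonneg (n : ℕ) : 0 ≤ abundancy n := by
  unfold abundancy; positivity

lemma abundancy_prod {ι : Type*} (s : Finset ι) (f : ι → ℕ)
    (hf : (s : Set ι).Pairwise (Nat.Coprime on f)) :
    abundancy (∏ i ∈ s, f i) = ∏ i ∈ s, abundancy (f i) := by
  simp only [abundancy, isMultiplicative_sigma.map_prod f s hf, Nat.cast_prod, prod_div_distrib]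

lemma abundancy_prod_prime_pow {ι : Type*} {s : Finset ι} {p : ι → ℕ} (a : ι → ℕ)
    (hp : ∀ j ∈ s, (p j).Prime) (hdist : ∀ i ∈ s, ∀ j ∈ s, i ≠ j → p i ≠ p j) :
    abundancy (∏ j ∈ s, p j ^ a j) = ∏ j ∈ s, abundancy (p j ^ a j) :=
  abundancy_prod s _ fun i hi j hj hij =>
    ((Nat.coprime_primes (hp i hi) (hp j hj)).2 (hdist i hi j hj hij)).pow _ _

lemma abundancy_prime_pow_lt {p : ℕ} (hp : p.Prime) (a : ℕ) :
    abundancy (p ^ a) < p / (p - 1) := by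
  have hp1 : (1 : ℝ) < p := by exact_mod_cast hp.one_lt
  have hσ : (σ 1 (p ^ a) : ℝ) = ((p : ℝ) ^ (a + 1) - 1) / (p - 1) := by
    rw [sigma_one_apply_prime_pow hp, ← geom_sum_eq hp1.ne']
    push_cast; rfl
  rw [abundancy, hσ, Nat.cast_pow, div_div, div_lt_div_iff₀ (by positivity) (by linarith), pow_succ]
  nlinarith [pow_pos (zero_lt_one.trans hp1) a]

lemma div_sub_one_antitone {x y : ℝ} (hx : 1 < x) (hxy : x ≤ y) :
    y / (y - 1) ≤ x / (x - 1) := by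
  rw [div_le_div_iff₀ (by linarith) (by linarith)]
  linarith

lemma prod_range_add_div_add_sub_one {q : ℝ} (hq : 1 < q) (K : ℕ) :
    ∏ i ∈ range K, (q + i) / (q + i - 1) = (q + K - 1) / (q - 1) := by
  induction K with
  | zero => simp [div_self (by linarith : q - 1 ≠ 0)]
  | succ K ih =>
    have hK : q + K - 1 ≠ 0 := by have : (0 : ℝ) ≤ K := K.cast_nonneg; linarith
    rw [prod_range_succ, ih]
    field_simp
    push_cast
    ring

lemma prod_range_div_sub_one_le {q : ℝ} (hq : 1 < q) {K : ℕ} {x : ℕ → ℝ}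
    (hx : ∀ i < K, q + i ≤ x i) :
    ∏ i ∈ range K, x i / (x i - 1) ≤ (q + K - 1) / (q - 1) := by
  rw [← prod_range_add_div_add_sub_one hq]
  refine prod_le_prod (fun i hi => ?_) (fun i hi => ?_)
  all_goals
    have hqi : 1 < q + i := by have : (0 : ℝ) ≤ i := i.cast_nonneg; linarith
    have hxi := hx i (mem_range.1 hi)
  · exact div_nonneg (by linarith) (by linarith)
  · exact div_sub_one_antitone hqi hxi

lemma add_sub_le_of_strictMonoOn {f : ℕ → ℕ} {a b : ℕ} (hf : StrictMonoOn f (Set.Icc a b))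
    {j : ℕ} (hj : j ∈ Set.Icc a b) : f a + (j - a) ≤ f j := by
  obtain ⟨haj, hjb⟩ := hj
  induction j, haj using Nat.le_induction with
  | base => simp
  | succ j haj ih =>
    have := hf ⟨haj, by omega⟩ ⟨by omega, hjb⟩ (Nat.lt_succ_self j)
    have := ih (by omega)
    omega

lemma prod_Icc_div_sub_one_le {f : ℕ → ℕ} {a b : ℕ} (hab : a ≤ b) (ha : 2 ≤ f a)
    (hf : StrictMonoOn f (Set.Icc a b)) :
    ∏ j ∈ Icc a b, (f j : ℝ) / (f j - 1) ≤ ((f a : ℝ) + b - a) / (f a - 1) := by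
  have hq : (1 : ℝ) < f a := by exact_mod_cast ha
  rw [← Ico_add_one_right_eq_Icc, prod_Ico_eq_prod_range]
  convert prod_range_div_sub_one_le hq (K := b + 1 - a) (x := fun i => (f (a + i) : ℝ))
    (fun i hi => ?_) using 2
  · rw [Nat.cast_sub (by omega)]; push_cast; ring
  · have := add_sub_le_of_strictMonoOn hf (j := a + i) ⟨by omega, by omega⟩
    rw [Nat.add_sub_cancel_left] at this
    exact_mod_cast this

lemma prod_Icc_mul_prod_Icc {M : Type*} [CommMonoid M] (f : ℕ → M) {a b c : ℕ}
    (hab : a ≤ b + 1) (hbc : b ≤ c) :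
    (∏ i ∈ Icc a b, f i) * ∏ i ∈ Icc (b + 1) c, f i = ∏ i ∈ Icc a c, f i := by
  simp only [← Ico_add_one_right_eq_Icc]
  exact prod_Ico_consecutive f hab (by omega)

lemma div_prod_mul_prod_le_prod_Icc {r c : ℕ → ℝ} {t : ℝ} {l k₁ k : ℕ} (hl : l ≤ k₁)
    (hk : k₁ ≤ k) (hr : ∀ j, 0 ≤ r j) (hrc : ∀ j ∈ Icc (l + 1) k₁, r j ≤ c j)
    (ht : t ≤ ∏ j ∈ Icc 1 k, r j) :
    t / ((∏ j ∈ Icc 1 l, r j) * ∏ j ∈ Icc (l + 1) k₁, c j) ≤ ∏ j ∈ Icc (k₁ + 1) k, r j := by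
  have h0 (s : Finset ℕ) : 0 ≤ ∏ j ∈ s, r j := prod_nonneg fun j _ => hr j
  have hrc' := prod_le_prod (fun j _ => hr j) hrc
  rw [← prod_Icc_mul_prod_Icc r (by omega) hk, ← prod_Icc_mul_prod_Icc r (by omega) hl] at ht
  refine div_le_of_le_mul₀ (mul_nonneg (h0 _) ((h0 _).trans hrc')) (h0 _) (ht.trans ?_)
  rw [mul_comm _ (∏ j ∈ Icc (k₁ + 1) k, r j)]
  gcongr <;> exact h0 _

lemma lt_one_add_div_of_lt_mul {m A q K : ℝ} (hA : 1 < A) (hq : 1 < q)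
    (hmA : 1 < m * (A - 1) / A) (h : m < A / (A - 1) * ((q + K - 1) / (q - 1))) :
    q < 1 + K / (m * (A - 1) / A - 1) := by
  have hX : m * (A - 1) / A < (q + K - 1) / (q - 1) := by
    have hA' : 0 < (A - 1) / A := div_pos (by linarith) (by linarith)
    calc m * (A - 1) / A = m * ((A - 1) / A) := mul_div_assoc _ _ _
      _ < A / (A - 1) * ((q + K - 1) / (q - 1)) * ((A - 1) / A) := by gcongr
      _ = (q + K - 1) / (q - 1) := by
        field_simp [show A - 1 ≠ 0 by linarith, show A ≠ 0 by linarith]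
  rw [lt_div_iff₀ (by linarith)] at hX
  rw [← sub_lt_iff_lt_add', lt_div_iff₀ (by linarith)]
  linarith

theorem bounds_on_smallest_unknown_prime_d_general
    (l1 k1 k : ℕ) (hl1k1 : l1 ≤ k1)
    (p a : ℕ → ℕ)
    (hp : ∀ j ∈ Finset.Icc 1 k, (p j).Prime)
    (hdist : ∀ i ∈ Finset.Icc 1 k, ∀ j ∈ Finset.Icc 1 k, i ≠ j → p i ≠ p j)
    (hsorted : ∀ i j : ℕ, k1 + 1 ≤ i → i < j → j ≤ k → p i < p j)
    (n : ℕ) (hn : n = ∏ j ∈ Finset.Icc 1 k, p j ^ a j)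
    (tmin : ℝ)
    (hlow : tmin ≤ (σ 1 n : ℝ) / n)
    (m : ℝ)
    (hm : m = tmin /
      ((∏ j ∈ Finset.Icc 1 l1, (σ 1 (p j ^ a j) : ℝ) / (p j ^ a j : ℕ)) *
       (∏ j ∈ Finset.Icc (l1 + 1) k1, (p j : ℝ) / ((p j : ℝ) - 1))))
    (hk2 : k1 + 2 ≤ k)
    (A : ℝ) (hA1 : 1 < A) (hA2 : A ≤ (p (k1 + 1) : ℝ))
    (hmA : 1 < m * (A - 1) / A) :
    (p (k1 + 2) : ℝ) < 1 + ((k : ℝ) - (k1 : ℝ) - 1) / (m * (A - 1) / A - 1) := by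
  have hlt : ∀ j ∈ Icc 1 k, abundancy (p j ^ a j) < p j / (p j - 1) :=
    fun j hj => abundancy_prime_pow_lt (hp j hj) (a j)
  have hm_le : m ≤ abundancy (p (k1 + 1) ^ a (k1 + 1)) *
      ∏ j ∈ Icc (k1 + 2) k, abundancy (p j ^ a j) := by
    have := div_prod_mul_prod_le_prod_Icc hl1k1 (by omega) (fun j => abundancy_nonneg _)
      (fun j hj => (hlt j (by grind)).le)
      (hlow.trans_eq (hn ▸ abundancy_prod_prime_pow a hp hdist))
    rw [Icc_eq_cons_Ioc (show k1 + 1 ≤ k by omega), prod_cons, ← Icc_add_one_left_eq_Ioc] at this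
    exact hm ▸ this
  have hfirst : abundancy (p (k1 + 1) ^ a (k1 + 1)) < A / (A - 1) :=
    (hlt _ (by grind)).trans_le (div_sub_one_antitone hA1 hA2)
  have htail : ∏ j ∈ Icc (k1 + 2) k, abundancy (p j ^ a j) ≤
      ((p (k1 + 2) : ℝ) + ((k : ℝ) - k1 - 1) - 1) / (p (k1 + 2) - 1) :=
    (prod_le_prod (fun j _ => abundancy_nonneg _) fun j hj => (hlt j (by grind)).le).trans
      (prod_Icc_div_sub_one_le hk2 (hp _ (by grind)).two_le
        fun i hi j hj hij => hsorted i j (by grind) hij hj.2) |>.trans_eq (by push_cast; ring)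
  have hq : (1 : ℝ) < p (k1 + 2) := by exact_mod_cast (hp _ (by grind)).one_lt
  have hbound : 0 < ((p (k1 + 2) : ℝ) + ((k : ℝ) - k1 - 1) - 1) / (p (k1 + 2) - 1) := by
    have : (k1 : ℝ) + 2 ≤ k := by exact_mod_cast hk2
    exact div_pos (by linarith) (by linarith)
  refine lt_one_add_div_of_lt_mul hA1 hq hmA ?_
  calc m ≤ abundancy (p (k1 + 1) ^ a (k1 + 1)) * ∏ j ∈ Icc (k1 + 2) k, abundancy (p j ^ a j) := hm_le
    _ ≤ _ := mul_le_mul_of_nonneg_left htail (abundancy_nonneg _)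
    _ < _ := mul_lt_mul_of_pos_right hfirst hbound

theorem bounds_on_smallest_unknown_prime_d
    (l1 k1 k : ℕ) (hl1k1 : l1 ≤ k1) (hk1k : k1 < k)
    (p a : ℕ → ℕ)
    (hp : ∀ j ∈ Finset.Icc 1 k, (p j).Prime)
    (hdist : ∀ i ∈ Finset.Icc 1 k, ∀ j ∈ Finset.Icc 1 k, i ≠ j → p i ≠ p j)
    (ha : ∀ j ∈ Finset.Icc 1 k, 0 < a j)
    (hsorted : ∀ i j : ℕ, k1 + 1 ≤ i → i < j → j ≤ k → p i < p j)
    (n : ℕ) (hn : n = ∏ j ∈ Finset.Icc 1 k, p j ^ a j)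
    (tmin tmax : ℝ) (htmin : 0 < tmin) (htmax : 0 < tmax)
    (hlow : tmin ≤ (σ 1 n : ℝ) / n) (hhigh : (σ 1 n : ℝ) / n ≤ tmax)
    (m : ℝ)
    (hm : m = tmin /
      ((∏ j ∈ Finset.Icc 1 l1, (σ 1 (p j ^ a j) : ℝ) / (p j ^ a j : ℕ)) *
       (∏ j ∈ Finset.Icc (l1 + 1) k1, (p j : ℝ) / ((p j : ℝ) - 1))))
    (hk2 : k1 + 2 ≤ k) (ha2 : 2 ≤ a (k1 + 1))
    (A : ℝ) (hA1 : 1 < A) (hA2 : A ≤ (p (k1 + 1) : ℝ))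
    (hmA : 1 < m * (A - 1) / A) :
    (p (k1 + 2) : ℝ) < 1 + ((k : ℝ) - (k1 : ℝ) - 1) / (m * (A - 1) / A - 1) :=
  bounds_on_smallest_unknown_prime_d_general l1 k1 k hl1k1 p a hp hdist hsorted n hn tmin hlow m hm
    hk2 A hA1 hA2 hmA
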